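/- Let d, n, r, φ be real numbers with d > 0, n > 0, r ≥ 0, φ ≥ 0, and let n_1, …, n_k be nonnegative real numbers with ∑_{i=1}^k n_i = n and (k : ℝ) = n·r. If r·(d + φ) ≤ d − 2 and φ·n·d ≤ n² − ∑_{i=1}^k n_i², then ∑_{i=1}^k [(n_i + φ)²·d + (n_i + φ)·d²] ≤ n²·d + n·d². -/
import Mathlib


/-- Main complexity bound (Lemma 4.2): the subgraph-level inference cost is at most
the classical full-graph inference cost `n²·d + n·d²`. -/
theorem fitgnn_inference_complexity_bound
    (d n r φ : ℝ) (hd : 0 < d) (hn : 0 < n) (hr : 0 ≤ r) (hφ : 0 ≤ φ)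
    (k : ℕ) (ni : Fin k → ℝ) (hni : ∀ i, 0 ≤ ni i)
    (hsum : ∑ i, ni i = n) (hk : (k : ℝ) = n * r)
    (h1 : r * (d + φ) ≤ d - 2)
    (h2 : φ * n * d ≤ n ^ 2 - ∑ i, (ni i) ^ 2) :
    ∑ i, ((ni i + φ) ^ 2 * d + (ni i + φ) * d ^ 2) ≤ n ^ 2 * d + n * d ^ 2 := by
  have hexp : ∀ i : Fin k, (ni i + φ) ^ 2 * d + (ni i + φ) * d ^ 2
      = (ni i) ^ 2 * d + (2 * φ * d + d ^ 2) * (ni i) + (φ ^ 2 * d + φ * d ^ 2) := by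
    intro i; ring
  rw [Finset.sum_congr rfl fun i _ => hexp i, Finset.sum_add_distrib,
    Finset.sum_add_distrib, ← Finset.sum_mul, ← Finset.mul_sum, hsum,
    Finset.sum_const, Finset.card_univ, Fintype.card_fin, nsmul_eq_mul, hk]
  nlinarith [mul_le_mul_of_nonneg_left h1 (mul_nonneg hn.le hφ),
    mul_le_mul_of_nonneg_right h2 hd.le, mul_pos hn hd,
    mul_nonneg (mul_nonneg (mul_nonneg hn.le hφ) hr) hd.le,
    mul_nonneg (mul_nonneg hn.le hφ) hd.le]
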